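/- Applying the column-removal construction to a k×n Youden rectangle always yields a k×(n−k) array on n−1 symbols that is equireplicate with replication number k−λ and has all pairwise column intersections of size exactly λ, regardless of which column is removed. -/

import Mathlib

/-!
Let `N` be the symbol–column incidence matrix of `Y`. Columns have `k` symbols and meet pairwise
in `λ`, so `Nᵀ N = (k - λ) I + λ J`; every symbol occurs `k` times (each row is a permutation),
so `N J = k J = J N`. Since `λ < k` (if `λ = k` all columns would coincide, and a symbol
would occur `n > k` times), the matrix `(k - λ) I + λ J` is invertible, hence so is `N`,
and `N Nᵀ = N (Nᵀ N) N⁻¹ = Nᵀ N` because `N` commutes with it. Reading off an off-diagonal entry,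
two distinct symbols share exactly `λ` columns, none of which is `c` if one of them misses `c`.
-/

open Finset Matrix

/-- The set of symbols occurring in column `j` of a `k × n` array. -/
def colSet {k n : ℕ} (A : Fin k → Fin n → Fin n) (j : Fin n) : Finset (Fin n) :=
  Finset.univ.image fun i => A i j

namespace Matrix

variable {l m n R : Type*} [Fintype l] [Fintype m] [Fintype n]

def allOnes (m n R : Type*) [One R] : Matrix m n R := of fun _ _ => 1

omit [Fintype l] [Fintype n] in
lemma allOnes_mul_allOnes [Semiring R] :
    allOnes l m R * allOnes m n R = Fintype.card m • allOnes l n R := by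
  ext; simp [allOnes, mul_apply]

lemma smul_one_add_smul_allOnes_mul [CommSemiring R] [DecidableEq n] (a b c d : R) :
    (a • 1 + b • allOnes n n R) * (c • 1 + d • allOnes n n R) =
      (a * c) • 1 + (a * d + b * c + Fintype.card n • (b * d)) • allOnes n n R := by
  simp only [Matrix.add_mul, Matrix.mul_add, Matrix.smul_mul, Matrix.mul_smul, Matrix.one_mul,
    Matrix.mul_one, allOnes_mul_allOnes, smul_comm _ (Fintype.card n)]
  module

lemma isUnit_det_smul_one_add_smul_allOnes [Field R] [DecidableEq n] {a b : R} (ha : a ≠ 0)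
    (hab : a + b * Fintype.card n ≠ 0) : IsUnit (a • 1 + b • allOnes n n R).det := by
  refine isUnit_det_of_right_inverse (B := a⁻¹ • 1 + (-(b / (a * (a + b * Fintype.card n)))) •
    allOnes n n R) ?_
  have hcoeff : a * -(b / (a * (a + b * Fintype.card n))) + b * a⁻¹ +
      Fintype.card n • (b * -(b / (a * (a + b * Fintype.card n)))) = 0 := by
    rw [nsmul_eq_mul]
    field_simp
    ring
  rw [smul_one_add_smul_allOnes_mul, mul_inv_cancel₀ ha, hcoeff, one_smul, zero_smul, add_zero]

theorem mul_transpose_eq_of_transpose_mul_eq [CommRing R] [IsStablyFiniteRing R]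
    [DecidableEq m] [DecidableEq n] {N : Matrix m n R} {Bm : Matrix m m R} {Bn : Matrix n n R}
    (hcard : Fintype.card m = Fintype.card n) (hBn : IsUnit Bn.det) (hN : Nᵀ * N = Bn)
    (hcomm : N * Bn = Bm * N) : N * Nᵀ = Bm := by
  have hleft : (Bn⁻¹ * Nᵀ) * N = 1 := by rw [Matrix.mul_assoc, hN, nonsing_inv_mul _ hBn]
  have hright : N * (Bn⁻¹ * Nᵀ) = 1 := (mul_eq_one_comm_of_card_eq _ _ R hcard.symm).1 hleft
  calc N * Nᵀ = N * (Bn * Bn⁻¹) * Nᵀ := by rw [mul_nonsing_inv _ hBn, Matrix.mul_one]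
    _ = Bm * (N * (Bn⁻¹ * Nᵀ)) := by simp only [← Matrix.mul_assoc, hcomm]
    _ = Bm := by rw [hright, Matrix.mul_one]

end Matrix

section IncidenceMatrix

variable {α ι : Type*} [DecidableEq α] (R : Type*) [Semiring R] (B : ι → Finset α)

def incidenceMatrix : Matrix α ι R := of fun s j => if s ∈ B j then 1 else 0

lemma transpose_incidenceMatrix_mul_apply [Fintype α] (j j' : ι) :
    ((incidenceMatrix R B)ᵀ * incidenceMatrix R B) j j' = #(B j ∩ B j') := by
  simp only [incidenceMatrix, mul_apply, transpose_apply, of_apply, mul_boole, ← ite_and,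
    sum_boole]
  congr 2
  ext
  simp [and_comm]

lemma incidenceMatrix_mul_transpose_apply [Fintype ι] (s s' : α) :
    (incidenceMatrix R B * (incidenceMatrix R B)ᵀ) s s' = #{j | s ∈ B j ∧ s' ∈ B j} := by
  simp [incidenceMatrix, mul_apply, ← ite_and, sum_boole, and_comm]

lemma incidenceMatrix_mul_allOnes [Fintype ι] {r : ℕ} (hrep : ∀ s, #{j | s ∈ B j} = r) :
    incidenceMatrix R B * allOnes ι ι R = r • allOnes α ι R := by
  ext s j
  simp [incidenceMatrix, allOnes, mul_apply, sum_boole, hrep]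

lemma allOnes_mul_incidenceMatrix [Fintype α] {k : ℕ} (hsize : ∀ j, #(B j) = k) :
    allOnes α α R * incidenceMatrix R B = k • allOnes α ι R := by
  ext s j
  simp [incidenceMatrix, allOnes, mul_apply, hsize]

end IncidenceMatrix

section SymmetricDesign

variable {α ι : Type*} [Fintype ι] [DecidableEq α] {B : ι → Finset α} {k lam : ℕ}

lemma lt_of_card_inter_eq (hsize : ∀ j, #(B j) = k) (hrep : ∀ s, #{j | s ∈ B j} = k)
    (hinter : ∀ j j', j ≠ j' → #(B j ∩ B j') = lam) (hk : 0 < k) (hkι : k < Fintype.card ι) :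
    lam < k := by
  obtain ⟨j₀⟩ : Nonempty ι := Fintype.card_pos_iff.mp (by omega)
  obtain ⟨s, hs⟩ : (B j₀).Nonempty := card_pos.mp (by rw [hsize]; exact hk)
  by_contra! hle
  have hsub : ∀ j, B j₀ ⊆ B j := by
    intro j
    rcases eq_or_ne j₀ j with rfl | hj
    · rfl
    · refine inter_eq_left.mp (eq_of_subset_of_card_le inter_subset_left ?_)
      rw [hinter _ _ hj, hsize]
      exact hle
  have hall : #{j | s ∈ B j} = Fintype.card ι := by
    rw [filter_true_of_mem fun j _ => hsub j hs, card_univ]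
  have := hrep s
  omega

variable [Fintype α] [DecidableEq ι]

theorem card_filter_mem_and_mem_eq_of_card_inter_eq (hcard : Fintype.card ι = Fintype.card α)
    (hsize : ∀ j, #(B j) = k) (hrep : ∀ s, #{j | s ∈ B j} = k)
    (hinter : ∀ j j', j ≠ j' → #(B j ∩ B j') = lam) (hlam : lam < k) {s s' : α} (hss : s ≠ s') :
    #{j | s ∈ B j ∧ s' ∈ B j} = lam := by
  set N := incidenceMatrix ℚ B
  have ha : (0 : ℚ) < k - lam := by
    rw [sub_pos]
    exact_mod_cast hlam
  have hNtN : Nᵀ * N = ((k : ℚ) - lam) • 1 + (lam : ℚ) • allOnes ι ι ℚ := by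
    ext j j'
    rw [transpose_incidenceMatrix_mul_apply]
    rcases eq_or_ne j j' with rfl | h
    · simp [hsize, allOnes]
    · simp [hinter _ _ h, h, allOnes]
  have hunit : IsUnit (((k : ℚ) - lam) • 1 + (lam : ℚ) • allOnes ι ι ℚ).det :=
    isUnit_det_smul_one_add_smul_allOnes ha.ne' (by positivity)
  have hcomm : N * (((k : ℚ) - lam) • 1 + (lam : ℚ) • allOnes ι ι ℚ) =
      (((k : ℚ) - lam) • 1 + (lam : ℚ) • allOnes α α ℚ) * N := by
    simp only [Matrix.mul_add, Matrix.add_mul, Matrix.mul_smul, Matrix.smul_mul, Matrix.mul_one,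
      Matrix.one_mul, N, incidenceMatrix_mul_allOnes ℚ B hrep,
      allOnes_mul_incidenceMatrix ℚ B hsize]
  have hentry := congrFun₂ (mul_transpose_eq_of_transpose_mul_eq hcard.symm hunit hNtN hcomm) s s'
  rw [incidenceMatrix_mul_transpose_apply] at hentry
  exact_mod_cast (by simpa [hss, allOnes] using hentry)

end SymmetricDesign

section YoudenRectangle

variable {k n : ℕ} (Y : Fin k → Fin n → Fin n)

lemma card_colSet (hcol : ∀ j : Fin n, Function.Injective fun i => Y i j) (j : Fin n) :
    #(colSet Y j) = k := by
  rw [colSet, card_image_of_injective _ (hcol j), card_univ, Fintype.card_fin]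

/-- Each row is a permutation, so `s` lies in exactly one column `g i` per row `i`, and these
columns are distinct because no column repeats a symbol. -/
lemma card_filter_mem_colSet (hrow : ∀ i, Function.Injective (Y i))
    (hcol : ∀ j : Fin n, Function.Injective fun i => Y i j) (s : Fin n) :
    #{j | s ∈ colSet Y j} = k := by
  choose g hg using fun i => Finite.surjective_of_injective (hrow i) s
  have hg_inj : Function.Injective g := fun i i' h =>
    hcol (g i) (by dsimp only; rw [hg i, ← hg i', h])
  have himage : ({j | s ∈ colSet Y j} : Finset (Fin n)) = univ.image g := by
    ext j
    simp only [colSet, mem_filter, mem_univ, true_and, mem_image]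
    exact exists_congr fun i => ⟨fun h => hrow i (by rw [hg, h]), fun h => h ▸ hg i⟩
  rw [himage, card_image_of_injective _ hg_inj, card_univ, Fintype.card_fin]

end YoudenRectangle

/-- Construction 1 applied to a `k × n` Youden rectangle with parameter `λ`:
for any removed column `c`, the resulting array has `n - k` columns (indexed
by the symbols not in column `c`), is equireplicate with replication number
`k - λ` (each remaining symbol, i.e. each column `j ≠ c` of `Y`, occurs
`k - λ` times), and any two distinct columns share exactly `λ` symbols. -/
theorem construction_on_youden (n k lam : ℕ) (hk : 1 < k) (hkn : k < n)
    (Y : Fin k → Fin n → Fin n)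
    (hrow : ∀ i, Function.Injective (Y i))
    (hcol : ∀ j : Fin n, Function.Injective fun i => Y i j)
    (hdes : ∀ j j' : Fin n, j ≠ j' →
      ((colSet Y j) ∩ (colSet Y j')).card = lam) :
    ∀ c : Fin n,
      (Finset.univ \ colSet Y c).card = n - k ∧
      (∀ j : Fin n, j ≠ c → ((colSet Y j) \ (colSet Y c)).card = k - lam) ∧
      (∀ s s' : Fin n, s ∉ colSet Y c → s' ∉ colSet Y c → s ≠ s' →
        (Finset.univ.filter fun j : Fin n =>
          j ≠ c ∧ s ∈ colSet Y j ∧ s' ∈ colSet Y j).card = lam) := by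
  intro c
  have hsize := card_colSet Y hcol
  have hrep := card_filter_mem_colSet Y hrow hcol
  have hlam : lam < k := lt_of_card_inter_eq hsize hrep hdes (by omega) (by simpa using hkn)
  refine ⟨?_, fun j hj => ?_, fun s s' hs _ hss => ?_⟩
  · rw [card_univ_sdiff, Fintype.card_fin, hsize]
  · have := card_sdiff_add_card_inter (colSet Y j) (colSet Y c)
    rw [hdes j c hj, hsize] at this
    omega
  · rw [← card_filter_mem_and_mem_eq_of_card_inter_eq rfl hsize hrep hdes hlam hss]
    congr 1
    exact filter_congr fun j _ => and_iff_right_of_imp fun h hjc => hs (hjc ▸ h.1)
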